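/- arXiv:2103.00107 — 2 statements merged into one kernel-verified Lean document; each statement's English description precedes it below -/
import Mathlib

section
/- Fix λ ∈ [0,1] and a policy μ, and define N_λ^μ Q := (I − γλP^μ)⁻¹(r + γ(1−λ) P(MQ)) where (MQ)(y) := max_a Q y a. Then: (i) the operator λT^μ + (1−λ)T is a γ-contraction in sup norm, hence has a unique fixed point; and (ii) Q : X → A → ℝ satisfies N_λ^μ Q = Q if and only if λ T^μ Q + (1−λ) T Q = Q. In particular the unique fixed point of N_λ^μ coincides with the unique fixed point of λT^μ + (1−λ)T. -/
open scoped BigOperators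

namespace RLPQL

variable {X A : Type*} [Fintype X] [Fintype A]

/-- `P` is a transition kernel: nonnegative and rows sum to one. -/
def IsKernel (P : X → A → X → ℝ) : Prop :=
  (∀ x a y, 0 ≤ P x a y) ∧ ∀ x a, ∑ y, P x a y = 1

/-- `π` is a (Markov) policy: nonnegative and sums to one over actions. -/
def IsPolicy (π : X → A → ℝ) : Prop :=
  (∀ x a, 0 ≤ π x a) ∧ ∀ x, ∑ a, π x a = 1

/-- `(πQ)(x) = ∑_a π x a * Q x a`. -/
def polQ (π Q : X → A → ℝ) : X → ℝ := fun x => ∑ a, π x a * Q x a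

/-- `(PV)(x,a) = ∑_y P x a y * V y`. -/
def PV (P : X → A → X → ℝ) (V : X → ℝ) : X → A → ℝ := fun x a => ∑ y, P x a y * V y

/-- `P^π Q = P (π Q)`. -/
def Ppol (P : X → A → X → ℝ) (π Q : X → A → ℝ) : X → A → ℝ := PV P (polQ π Q)

/-- Bellman operator `T^π Q = r + γ P^π Q`. -/
def bellman (P : X → A → X → ℝ) (r : X → A → ℝ) (γ : ℝ) (π Q : X → A → ℝ) : X → A → ℝ :=
  fun x a => r x a + γ * Ppol P π Q x a

/-- Bellman optimality operator `(T Q)(x,a) = r x a + γ ∑_y P x a y * max_b Q y b`. -/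
noncomputable def optBellman (P : X → A → X → ℝ) (r : X → A → ℝ) (γ : ℝ) (Q : X → A → ℝ) :
    X → A → ℝ :=
  fun x a => r x a + γ * ∑ y, P x a y * (⨆ b, Q y b)

/-- `π` is greedy with respect to `Q`. -/
def IsGreedy (π Q : X → A → ℝ) : Prop := ∀ x, polQ π Q x = ⨆ a, Q x a

/-- `(I - c P^μ)⁻¹ f = ∑_{t=0}^∞ c^t (P^μ)^t f`. -/
noncomputable def resolvent (P : X → A → X → ℝ) (c : ℝ) (μ : X → A → ℝ) (f : X → A → ℝ) :
    X → A → ℝ :=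
  fun x a => ∑' t : ℕ, c ^ t * ((Ppol P μ)^[t] f) x a

/-- Peng's Q(λ) operator `N_λ^{μ,π} Q = (I - γλ P^μ)⁻¹ (r + γ(1-λ) P^π Q)`. -/
noncomputable def peng (P : X → A → X → ℝ) (r : X → A → ℝ) (γ lam : ℝ) (μ π Q : X → A → ℝ) :
    X → A → ℝ :=
  resolvent P (γ * lam) μ (fun x a => r x a + γ * (1 - lam) * Ppol P π Q x a)

/-- The mixture policy `c·μ + (1-c)·π`. -/
def mixP (c : ℝ) (μ π : X → A → ℝ) : X → A → ℝ := fun x a => c * μ x a + (1 - c) * π x a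

end RLPQL

open RLPQL

namespace RLPQL
variable {X A : Type*} [Fintype X] [Fintype A]

/-- The operator `N_λ^μ Q := (I - γλ P^μ)⁻¹ (r + γ(1-λ) P (M Q))`, where `(MQ)(y) = max_a Q y a`. -/
noncomputable def pengGreedy (P : X → A → X → ℝ) (r : X → A → ℝ) (γ lam : ℝ) (μ : X → A → ℝ)
    (Q : X → A → ℝ) : X → A → ℝ :=
  resolvent P (γ * lam) μ (fun x a => r x a + γ * (1 - lam) * PV P (fun y => ⨆ b, Q y b) x a)

/-- The operator `λ T^μ + (1-λ) T`. -/
noncomputable def mixBellman (P : X → A → X → ℝ) (r : X → A → ℝ) (γ lam : ℝ) (μ : X → A → ℝ)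
    (Q : X → A → ℝ) : X → A → ℝ :=
  fun x a => lam * bellman P r γ μ Q x a + (1 - lam) * optBellman P r γ Q x a

end RLPQL

/-!
Write `c = γλ` and `f_Q = r + γ(1-λ) P(MQ)`. Then `λT^μ Q + (1-λ)T Q = f_Q + c P^μ Q`, while
`N_λ^μ Q = (∑ₜ (c P^μ)^t) f_Q` is a Neumann series: since `P^μ` is a Markov operator it has
sup-norm operator norm at most `1`, so `∑ₜ (c P^μ)^t` inverts `1 - c P^μ` and `Y = f + c P^μ Y`
holds exactly for `Y = (∑ₜ (c P^μ)^t) f`. Taking `Y = Q` gives the equivalence of the two fixed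
point equations. The contraction estimate combines the non-expansiveness of `P^μ`, of `P` and
of `Q ↦ MQ` with weights `γλ` and `γ(1-λ)`, and Banach's fixed point theorem does the rest.
-/

theorem eq_add_apply_iff_eq_tsum_pow_apply {𝕜 E : Type*} [NontriviallyNormedField 𝕜]
    [NormedAddCommGroup E] [NormedSpace 𝕜 E] [CompleteSpace E] {T : E →L[𝕜] E} (hT : ‖T‖ < 1)
    (f y : E) : y = f + T y ↔ y = (∑' t : ℕ, T ^ t) f := by
  rw [← sub_eq_iff_eq_add]
  change (1 - T) y = f ↔ _
  constructor
  · intro hf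
    calc y = ((∑' t : ℕ, T ^ t) * (1 - T)) y := by rw [geom_series_mul_neg T hT]; rfl
      _ = (∑' t : ℕ, T ^ t) f := congrArg _ hf
  · rintro rfl
    calc (1 - T) ((∑' t : ℕ, T ^ t) f) = ((1 - T) * ∑' t : ℕ, T ^ t) f := rfl
      _ = f := by rw [mul_neg_geom_series T hT]; rfl

theorem abs_ciSup_sub_ciSup_le {ι : Type*} [Finite ι] [Nonempty ι] {f g : ι → ℝ} {C : ℝ}
    (h : ∀ i, |f i - g i| ≤ C) : |(⨆ i, f i) - ⨆ i, g i| ≤ C := by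
  have key : ∀ f g : ι → ℝ, (∀ i, f i ≤ g i + C) → (⨆ i, f i) ≤ (⨆ i, g i) + C :=
    fun f g hfg => ciSup_le fun i =>
      (hfg i).trans (by gcongr; exact le_ciSup (Set.finite_range g).bddAbove i)
  rw [abs_sub_le_iff]
  constructor
  · linarith [key f g fun i => by linarith [(abs_le.1 (h i)).2]]
  · linarith [key g f fun i => by linarith [(abs_le.1 (h i)).1]]

theorem norm_sum_mul_le_of_sum_eq_one {ι : Type*} [Fintype ι] {w g : ι → ℝ} {M : ℝ}
    (hw0 : ∀ i, 0 ≤ w i) (hw1 : ∑ i, w i = 1) (hg : ∀ i, ‖g i‖ ≤ M) : ‖∑ i, w i * g i‖ ≤ M :=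
  calc ‖∑ i, w i * g i‖ ≤ ∑ i, w i * M := norm_sum_le_of_le _ fun i _ => by
        rw [norm_mul, Real.norm_of_nonneg (hw0 i)]
        exact mul_le_mul_of_nonneg_left (hg i) (hw0 i)
    _ = M := by rw [← Finset.sum_mul, hw1, one_mul]

namespace RLPQL

variable {X A : Type*} [Fintype X] {P : X → A → X → ℝ} {μ : X → A → ℝ}

theorem PV_sub (P : X → A → X → ℝ) (V V' : X → ℝ) : PV P (V - V') = PV P V - PV P V' := by
  ext x a
  simp only [PV, Pi.sub_apply, mul_sub, Finset.sum_sub_distrib]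

variable [Fintype A]

theorem norm_PV_le (hP : IsKernel P) (V : X → ℝ) : ‖PV P V‖ ≤ ‖V‖ :=
  (pi_norm_le_iff_of_nonneg (norm_nonneg V)).2 fun x =>
    (pi_norm_le_iff_of_nonneg (norm_nonneg V)).2 fun a =>
      norm_sum_mul_le_of_sum_eq_one (hP.1 x a) (hP.2 x a) (norm_le_pi_norm V)

theorem norm_polQ_le (hμ : IsPolicy μ) (Q : X → A → ℝ) : ‖polQ μ Q‖ ≤ ‖Q‖ :=
  (pi_norm_le_iff_of_nonneg (norm_nonneg Q)).2 fun x =>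
    (norm_sum_mul_le_of_sum_eq_one (hμ.1 x) (hμ.2 x) (norm_le_pi_norm (Q x))).trans
      (norm_le_pi_norm Q x)

theorem norm_Ppol_le (hP : IsKernel P) (hμ : IsPolicy μ) (Q : X → A → ℝ) :
    ‖Ppol P μ Q‖ ≤ ‖Q‖ :=
  (norm_PV_le hP _).trans (norm_polQ_le hμ Q)

variable (P μ) in
noncomputable def PpolCLM : (X → A → ℝ) →L[ℝ] (X → A → ℝ) :=
  LinearMap.toContinuousLinearMap
    { toFun := Ppol P μ
      map_add' := fun Q Q' => by
        ext x a
        simp only [Ppol, PV, polQ, Pi.add_apply, mul_add, Finset.sum_add_distrib]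
      map_smul' := fun c Q => by
        ext x a
        simp only [Ppol, PV, polQ, Pi.smul_apply, smul_eq_mul, RingHom.id_apply, Finset.mul_sum]
        exact Finset.sum_congr rfl fun _ _ => Finset.sum_congr rfl fun _ _ => by ring }

theorem PpolCLM_apply (Q : X → A → ℝ) : PpolCLM P μ Q = Ppol P μ Q := rfl

theorem norm_PpolCLM_le (hP : IsKernel P) (hμ : IsPolicy μ) : ‖PpolCLM P μ‖ ≤ 1 :=
  ContinuousLinearMap.opNorm_le_bound _ zero_le_one fun Q => by
    rw [one_mul, PpolCLM_apply]
    exact norm_Ppol_le hP hμ Q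

theorem norm_smul_PpolCLM_lt_one (hP : IsKernel P) (hμ : IsPolicy μ) {c : ℝ} (hc : |c| < 1) :
    ‖c • PpolCLM P μ‖ < 1 :=
  calc ‖c • PpolCLM P μ‖ = |c| * ‖PpolCLM P μ‖ := by rw [norm_smul, Real.norm_eq_abs]
    _ ≤ |c| * 1 := by gcongr; exact norm_PpolCLM_le hP hμ
    _ < 1 := by rwa [mul_one]

theorem resolvent_eq_tsum_pow_apply (hP : IsKernel P) (hμ : IsPolicy μ) {c : ℝ} (hc : |c| < 1)
    (f : X → A → ℝ) : resolvent P c μ f = (∑' t : ℕ, (c • PpolCLM P μ) ^ t) f := by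
  have hS := summable_geometric_of_norm_lt_one (norm_smul_PpolCLM_lt_one hP hμ hc)
  have hsum : Summable fun t : ℕ => ((c • PpolCLM P μ) ^ t) f :=
    hS.mapL (ContinuousLinearMap.apply ℝ (X → A → ℝ) f)
  rw [show (∑' t : ℕ, (c • PpolCLM P μ) ^ t) f = ∑' t : ℕ, ((c • PpolCLM P μ) ^ t) f from
    (ContinuousLinearMap.apply ℝ (X → A → ℝ) f).map_tsum hS]
  ext x a
  rw [tsum_apply hsum, tsum_apply (Pi.summable.1 hsum x)]
  refine tsum_congr fun t => ?_
  rw [smul_pow, smul_apply, pow_apply_eq_iterate]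
  rfl

theorem mixBellman_eq (r : X → A → ℝ) (γ lam : ℝ) (Q : X → A → ℝ) :
    mixBellman P r γ lam μ Q =
      (fun x a => r x a + γ * (1 - lam) * PV P (fun y => ⨆ b, Q y b) x a) +
        (γ * lam) • PpolCLM P μ Q := by
  ext x a
  simp only [mixBellman, bellman, optBellman, PV, Pi.add_apply, Pi.smul_apply, smul_eq_mul,
    PpolCLM_apply]
  ring

theorem pengGreedy_eq_self_iff (hP : IsKernel P) (hμ : IsPolicy μ) (r : X → A → ℝ) {γ lam : ℝ}
    (hγ0 : 0 ≤ γ) (hγ1 : γ < 1) (hlam0 : 0 ≤ lam) (hlam1 : lam ≤ 1) (Q : X → A → ℝ) :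
    pengGreedy P r γ lam μ Q = Q ↔ mixBellman P r γ lam μ Q = Q := by
  have hc : |γ * lam| < 1 := by
    rw [abs_of_nonneg (mul_nonneg hγ0 hlam0)]
    nlinarith
  rw [pengGreedy, resolvent_eq_tsum_pow_apply hP hμ hc, mixBellman_eq, eq_comm,
    ← eq_add_apply_iff_eq_tsum_pow_apply (norm_smul_PpolCLM_lt_one hP hμ hc), eq_comm]
  exact Iff.rfl

theorem norm_iSup_sub_iSup_le [Nonempty A] (Q Q' : X → A → ℝ) :
    ‖(fun y => ⨆ b, Q y b) - fun y => ⨆ b, Q' y b‖ ≤ ‖Q - Q'‖ :=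
  (pi_norm_le_iff_of_nonneg (norm_nonneg _)).2 fun y => by
    rw [Pi.sub_apply, Real.norm_eq_abs]
    refine abs_ciSup_sub_ciSup_le fun b => ?_
    rw [← Real.norm_eq_abs]
    exact (norm_le_pi_norm (Q - Q') y).trans' (norm_le_pi_norm ((Q - Q') y) b)

theorem norm_mixBellman_sub_le [Nonempty A] (hP : IsKernel P) (hμ : IsPolicy μ)
    (r : X → A → ℝ) {γ lam : ℝ} (hγ0 : 0 ≤ γ) (hlam0 : 0 ≤ lam) (hlam1 : lam ≤ 1)
    (Q Q' : X → A → ℝ) :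
    ‖mixBellman P r γ lam μ Q - mixBellman P r γ lam μ Q'‖ ≤ γ * ‖Q - Q'‖ :=
  calc ‖mixBellman P r γ lam μ Q - mixBellman P r γ lam μ Q'‖
      = ‖(γ * (1 - lam)) • PV P ((fun y => ⨆ b, Q y b) - fun y => ⨆ b, Q' y b) +
          (γ * lam) • PpolCLM P μ (Q - Q')‖ := by
        rw [mixBellman_eq, mixBellman_eq, PV_sub, map_sub]
        congr 1
        ext x a
        simp only [Pi.add_apply, Pi.sub_apply, Pi.smul_apply, smul_eq_mul]
        ring
    _ ≤ γ * (1 - lam) * ‖Q - Q'‖ + γ * lam * ‖Q - Q'‖ := by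
        have hlam' : 0 ≤ 1 - lam := sub_nonneg.2 hlam1
        refine norm_add_le_of_le ?_ ?_
        · rw [norm_smul, Real.norm_of_nonneg (mul_nonneg hγ0 hlam')]
          gcongr
          exact (norm_PV_le hP _).trans (norm_iSup_sub_iSup_le Q Q')
        · rw [norm_smul, Real.norm_of_nonneg (mul_nonneg hγ0 hlam0)]
          gcongr
          exact norm_Ppol_le hP hμ _
    _ = γ * ‖Q - Q'‖ := by ring

end RLPQL

theorem pengGreedy_fixedPoint_iff_general {X A : Type*} [Fintype X] [Fintype A] [Nonempty A]
    (P : X → A → X → ℝ) (r : X → A → ℝ) (γ lam : ℝ)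
    (hP : IsKernel P) (hγ0 : 0 ≤ γ) (hγ1 : γ < 1) (hlam0 : 0 ≤ lam) (hlam1 : lam ≤ 1)
    (μ : X → A → ℝ) (hμ : IsPolicy μ) :
    (∀ Q Q' : X → A → ℝ,
        ‖mixBellman P r γ lam μ Q - mixBellman P r γ lam μ Q'‖ ≤ γ * ‖Q - Q'‖) ∧
    (∃! Q : X → A → ℝ, mixBellman P r γ lam μ Q = Q) ∧
    (∀ Q : X → A → ℝ, pengGreedy P r γ lam μ Q = Q ↔ mixBellman P r γ lam μ Q = Q) ∧
    (∀ Q Q' : X → A → ℝ, pengGreedy P r γ lam μ Q = Q → mixBellman P r γ lam μ Q' = Q' →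
        Q = Q') := by
  have hcontr := norm_mixBellman_sub_le hP hμ r hγ0 hlam0 hlam1
  have hK : ContractingWith ⟨γ, hγ0⟩ (mixBellman P r γ lam μ) :=
    ⟨hγ1, LipschitzWith.of_dist_le_mul fun Q Q' => by
      rw [dist_eq_norm, dist_eq_norm]
      exact hcontr Q Q'⟩
  have hfix : ∃! Q, mixBellman P r γ lam μ Q = Q :=
    ⟨_, hK.fixedPoint_isFixedPt, fun _ hQ => hK.fixedPoint_unique hQ⟩
  have hiff := pengGreedy_eq_self_iff hP hμ r hγ0 hγ1 hlam0 hlam1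
  exact ⟨hcontr, hfix, hiff, fun Q Q' hQ hQ' => hfix.unique ((hiff Q).1 hQ) hQ'⟩

/-- (i) `λT^μ + (1-λ)T` is a `γ`-contraction in sup norm and has a unique
fixed point; (ii) `N_λ^μ Q = Q ↔ λT^μ Q + (1-λ)T Q = Q`. In particular the unique fixed
points of the two operators coincide. -/
theorem pengGreedy_fixedPoint_iff {X A : Type*} [Fintype X] [Fintype A] [Nonempty X] [Nonempty A]
    (P : X → A → X → ℝ) (r : X → A → ℝ) (γ lam : ℝ)
    (hP : IsKernel P) (hγ0 : 0 ≤ γ) (hγ1 : γ < 1) (hlam0 : 0 ≤ lam) (hlam1 : lam ≤ 1)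
    (μ : X → A → ℝ) (hμ : IsPolicy μ) :
    (∀ Q Q' : X → A → ℝ,
        ‖mixBellman P r γ lam μ Q - mixBellman P r γ lam μ Q'‖ ≤ γ * ‖Q - Q'‖) ∧
    (∃! Q : X → A → ℝ, mixBellman P r γ lam μ Q = Q) ∧
    (∀ Q : X → A → ℝ, pengGreedy P r γ lam μ Q = Q ↔ mixBellman P r γ lam μ Q = Q) ∧
    (∀ Q Q' : X → A → ℝ, pengGreedy P r γ lam μ Q = Q → mixBellman P r γ lam μ Q' = Q' →
        Q = Q') :=
  pengGreedy_fixedPoint_iff_general P r γ lam hP hγ0 hγ1 hlam0 hlam1 μ hμ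
end

section
/- (Upper bound on Q^{ρ†} − Q_K for Peng's Q(λ) with a fixed behavior policy.) Fix λ ∈ [0,1] and a policy μ, and suppose π† is a policy such that Q^{λμ+(1−λ)π†} ≥ Q^{λμ+(1−λ)π} pointwise for every policy π; write ρ† := λμ + (1−λ)π†. Let Q_0 : X → A → ℝ be arbitrary, let ε_k : X → A → ℝ be arbitrary, and define Q_{k+1} := N_λ^{μ,π_k} Q_k + ε_k, where π_k is any policy greedy with respect to Q_k. Define the linear operator A† := γ(1−λ)·(I − γλP^μ)⁻¹ ∘ P^{π†} on functions X → A → ℝ, and set d_k := Q^{ρ†} − Q_k. Then for every K ≥ 0, d_K + ∑_{k=0}^{K−1} (A†)^{K−k−1} ε_k ≤ (A†)^K d_0 pointwise. -/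
open scoped BigOperators

open RLPQL

namespace RLPQL
variable {X A : Type*} [Fintype X] [Fintype A]

/-- The linear operator `A† := γ(1-λ)·(I - γλP^μ)⁻¹ ∘ P^{π†}`. -/
noncomputable def Adag (P : X → A → X → ℝ) (γ lam : ℝ) (μ πd : X → A → ℝ)
    (f : X → A → ℝ) : X → A → ℝ :=
  fun x a => γ * (1 - lam) * resolvent P (γ * lam) μ (Ppol P πd f) x a

end RLPQL
/-!
Write `R := (I - γλP^μ)⁻¹` and `ρ† := λμ + (1-λ)π†`. Splitting `P^{ρ†} = λP^μ + (1-λ)P^{π†}` in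
the Bellman equation of `Q^{ρ†}` shows that `Q^{ρ†}` is a fixed point of `N_λ^{μ,π†}`. As `π_k` is
greedy for `Q_k`, `P^{π†} Q_k ≤ P^{π_k} Q_k`; since `R` is linear and monotone this gives
`d_{k+1} = N_λ^{μ,π†} Q^{ρ†} - N_λ^{μ,π_k} Q_k - ε_k ≤ A† d_k - ε_k`, and iterating the monotone
additive map `A†` yields the bound.
-/

open Finset Filter Topology

theorem add_sum_iterate_le_iterate {M : Type*} [AddCommMonoid M] [PartialOrder M]
    [IsOrderedAddMonoid M] (L : M →+ M) (hL : Monotone L) (d e : ℕ → M)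
    (h : ∀ k, d (k + 1) + e k ≤ L (d k)) :
    ∀ K, d K + ∑ k ∈ range K, L^[K - k - 1] (e k) ≤ L^[K] (d 0)
  | 0 => by simp
  | K + 1 => by
    set S := ∑ k ∈ range K, L^[K - k - 1] (e k)
    have hsum : ∑ k ∈ range (K + 1), L^[K + 1 - k - 1] (e k) = L S + e K := by
      rw [sum_range_succ, map_sum, show K + 1 - K - 1 = 0 by omega, Function.iterate_zero_apply]
      congr 1
      refine sum_congr rfl fun k hk => ?_
      rw [← Function.iterate_succ_apply' L]
      congr 2
      have := mem_range.1 hk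
      omega
    calc d (K + 1) + ∑ k ∈ range (K + 1), L^[K + 1 - k - 1] (e k)
        = (d (K + 1) + e K) + L S := by rw [hsum, add_comm (L S), add_assoc]
      _ ≤ L (d K) + L S := add_le_add_left (h K) _
      _ = L (d K + S) := (map_add L _ _).symm
      _ ≤ L (L^[K] (d 0)) := hL (add_sum_iterate_le_iterate L hL d e h K)
      _ = L^[K + 1] (d 0) := (Function.iterate_succ_apply' L K _).symm

namespace RLPQL

variable {X A : Type*} {P : X → A → X → ℝ} {μ π : X → A → ℝ}

lemma IsPolicy.mixP [Fintype A] {c : ℝ} (hμ : IsPolicy μ) (hπ : IsPolicy π) (hc0 : 0 ≤ c)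
    (hc1 : c ≤ 1) : IsPolicy (mixP c μ π) := by
  refine ⟨fun x a => ?_, fun x => ?_⟩
  · exact add_nonneg (mul_nonneg hc0 (hμ.1 x a)) (mul_nonneg (sub_nonneg.2 hc1) (hπ.1 x a))
  · simp only [RLPQL.mixP, sum_add_distrib, ← mul_sum, hμ.2 x, hπ.2 x]
    ring

lemma polQ_mono [Fintype A] (hπ : IsPolicy π) : Monotone (polQ π : (X → A → ℝ) → X → ℝ) :=
  fun _ _ h x => sum_le_sum fun a _ => mul_le_mul_of_nonneg_left (h x a) (hπ.1 x a)

lemma polQ_le_iSup [Fintype A] (hπ : IsPolicy π) (Q : X → A → ℝ) (x : X) :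
    polQ π Q x ≤ ⨆ a, Q x a :=
  calc polQ π Q x ≤ ∑ a, π x a * ⨆ b, Q x b :=
        sum_le_sum fun a _ => mul_le_mul_of_nonneg_left
          (le_ciSup (Set.finite_range _).bddAbove a) (hπ.1 x a)
    _ = ⨆ b, Q x b := by rw [← sum_mul, hπ.2 x, one_mul]

lemma PV_mono [Fintype X] (hP : IsKernel P) : Monotone (PV P) :=
  fun _ _ h x a => sum_le_sum fun y _ => mul_le_mul_of_nonneg_left (h y) (hP.1 x a y)

variable [Fintype X] [Fintype A]

lemma Ppol_mono (hP : IsKernel P) (hπ : IsPolicy π) : Monotone (Ppol P π) :=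
  (PV_mono hP).comp (polQ_mono hπ)

lemma Ppol_const (hP : IsKernel P) (hπ : IsPolicy π) (m : ℝ) :
    Ppol P π (fun _ _ => m) = fun _ _ => m := by
  funext x a
  simp only [Ppol, PV, polQ, ← sum_mul, hπ.2, hP.2, one_mul]

lemma Ppol_le_of_isGreedy (hP : IsKernel P) (hμ : IsPolicy μ) {Q : X → A → ℝ}
    (hπ : IsGreedy π Q) : Ppol P μ Q ≤ Ppol P π Q :=
  PV_mono hP fun x => (polQ_le_iSup hμ Q x).trans_eq (hπ x).symm

lemma Ppol_mixP (c : ℝ) (Q : X → A → ℝ) (x : X) (a : A) :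
    Ppol P (mixP c μ π) Q x a = c * Ppol P μ Q x a + (1 - c) * Ppol P π Q x a := by
  simp only [Ppol, PV, polQ, RLPQL.mixP, mul_sum, ← sum_add_distrib]
  exact sum_congr rfl fun y _ => sum_congr rfl fun b _ => by ring

variable (P π) in
def PpolLin : Module.End ℝ (X → A → ℝ) where
  toFun := Ppol P π
  map_add' f g := by
    funext x a
    simp only [Ppol, PV, polQ, Pi.add_apply, mul_add, sum_add_distrib]
  map_smul' t f := by
    funext x a
    simp only [Ppol, PV, polQ, Pi.smul_apply, smul_eq_mul, RingHom.id_apply, mul_sum]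
    exact sum_congr rfl fun y _ => sum_congr rfl fun b _ => by ring

lemma coe_PpolLin : ⇑(PpolLin P π) = Ppol P π := rfl

lemma Ppol_add (f g : X → A → ℝ) : Ppol P π (f + g) = Ppol P π f + Ppol P π g :=
  map_add (PpolLin P π) f g

lemma Ppol_sub (f g : X → A → ℝ) : Ppol P π (f - g) = Ppol P π f - Ppol P π g :=
  map_sub (PpolLin P π) f g

lemma iterate_Ppol_add (t : ℕ) (f g : X → A → ℝ) :
    (Ppol P π)^[t] (f + g) = (Ppol P π)^[t] f + (Ppol P π)^[t] g :=
  iterate_map_add (PpolLin P π) t f g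

lemma iterate_Ppol_sub (t : ℕ) (f g : X → A → ℝ) :
    (Ppol P π)^[t] (f - g) = (Ppol P π)^[t] f - (Ppol P π)^[t] g :=
  iterate_map_sub (PpolLin P π) t f g

lemma iterate_Ppol_smul (t : ℕ) (s : ℝ) (f : X → A → ℝ) :
    (Ppol P π)^[t] (s • f) = s • (Ppol P π)^[t] f := by
  simpa only [Module.End.coe_pow, coe_PpolLin] using map_smul (PpolLin P π ^ t) s f

lemma abs_iterate_Ppol_le (hP : IsKernel P) (hπ : IsPolicy π) {f : X → A → ℝ} {M : ℝ}
    (hf : ∀ x a, |f x a| ≤ M) (t : ℕ) (x : X) (a : A) : |(Ppol P π)^[t] f x a| ≤ M := by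
  have hmono := (Ppol_mono hP hπ).iterate t
  have hlow := hmono (show (fun _ _ => -M) ≤ f from fun x a => neg_le_of_abs_le (hf x a))
  have hup := hmono (show f ≤ fun _ _ => M from fun x a => le_of_abs_le (hf x a))
  rw [Function.iterate_fixed (Ppol_const hP hπ _)] at hlow hup
  exact abs_le.2 ⟨hlow x a, hup x a⟩

lemma exists_abs_iterate_Ppol_le (hP : IsKernel P) (hπ : IsPolicy π) (f : X → A → ℝ) :
    ∃ M, ∀ t x a, |(Ppol P π)^[t] f x a| ≤ M := by
  obtain ⟨M, hM⟩ := (Set.finite_range fun p : X × A => |f p.1 p.2|).bddAbove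
  exact ⟨M, abs_iterate_Ppol_le hP hπ fun x a => hM ⟨(x, a), rfl⟩⟩

section resolvent

variable {c : ℝ}

lemma summable_resolvent (hP : IsKernel P) (hμ : IsPolicy μ) (hc0 : 0 ≤ c) (hc1 : c < 1)
    (f : X → A → ℝ) (x : X) (a : A) :
    Summable fun t : ℕ => c ^ t * (Ppol P μ)^[t] f x a := by
  obtain ⟨M, hM⟩ := exists_abs_iterate_Ppol_le hP hμ f
  refine Summable.of_norm_bounded ((summable_geometric_of_lt_one hc0 hc1).mul_right M)
    fun t => ?_
  rw [Real.norm_eq_abs, abs_mul, abs_of_nonneg (pow_nonneg hc0 t)]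
  exact mul_le_mul_of_nonneg_left (hM t x a) (pow_nonneg hc0 t)

lemma resolvent_add (hP : IsKernel P) (hμ : IsPolicy μ) (hc0 : 0 ≤ c) (hc1 : c < 1)
    (f g : X → A → ℝ) :
    resolvent P c μ (f + g) = resolvent P c μ f + resolvent P c μ g := by
  funext x a
  simp only [resolvent, Pi.add_apply, iterate_Ppol_add, mul_add]
  exact (summable_resolvent hP hμ hc0 hc1 f x a).tsum_add
    (summable_resolvent hP hμ hc0 hc1 g x a)

lemma resolvent_sub (hP : IsKernel P) (hμ : IsPolicy μ) (hc0 : 0 ≤ c) (hc1 : c < 1)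
    (f g : X → A → ℝ) :
    resolvent P c μ (f - g) = resolvent P c μ f - resolvent P c μ g :=
  eq_sub_of_add_eq (by rw [← resolvent_add hP hμ hc0 hc1, sub_add_cancel])

lemma resolvent_smul (s : ℝ) (f : X → A → ℝ) :
    resolvent P c μ (s • f) = s • resolvent P c μ f := by
  funext x a
  simp only [resolvent, Pi.smul_apply, smul_eq_mul, iterate_Ppol_smul]
  rw [← tsum_mul_left]
  exact tsum_congr fun t => by ring

lemma resolvent_mono (hP : IsKernel P) (hμ : IsPolicy μ) (hc0 : 0 ≤ c) (hc1 : c < 1) :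
    Monotone (resolvent P c μ) := fun f g h x a =>
  (summable_resolvent hP hμ hc0 hc1 f x a).tsum_le_tsum (fun t => mul_le_mul_of_nonneg_left
    ((Ppol_mono hP hμ).iterate t h x a) (pow_nonneg hc0 t))
    (summable_resolvent hP hμ hc0 hc1 g x a)

lemma resolvent_eq_of_eq_add (hP : IsKernel P) (hμ : IsPolicy μ) (hc0 : 0 ≤ c) (hc1 : c < 1)
    {f Q : X → A → ℝ} (hQ : Q = f + c • Ppol P μ Q) : resolvent P c μ f = Q := by
  funext x a
  have hpartial : ∀ n, ∑ t ∈ range n, c ^ t * (Ppol P μ)^[t] f x a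
      = Q x a - c ^ n * (Ppol P μ)^[n] Q x a := by
    intro n
    induction n with
    | zero => simp
    | succ n ih =>
      have hf : (Ppol P μ)^[n] f = (Ppol P μ)^[n] Q - c • (Ppol P μ)^[n + 1] Q := by
        rw [eq_sub_of_add_eq hQ.symm, iterate_Ppol_sub, iterate_Ppol_smul, Function.iterate_succ_apply]
      rw [sum_range_succ, ih, hf]
      simp only [Pi.sub_apply, Pi.smul_apply, smul_eq_mul]
      ring
  obtain ⟨M, hM⟩ := exists_abs_iterate_Ppol_le hP hμ Q
  have hvanish : Tendsto (fun n => c ^ n * (Ppol P μ)^[n] Q x a) atTop (𝓝 0) := by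
    refine squeeze_zero_norm (fun n => ?_)
      (by simpa using (tendsto_pow_atTop_nhds_zero_of_lt_one hc0 hc1).mul_const M)
    rw [Real.norm_eq_abs, abs_mul, abs_of_nonneg (pow_nonneg hc0 n)]
    exact mul_le_mul_of_nonneg_left (hM n x a) (pow_nonneg hc0 n)
  refine tendsto_nhds_unique (summable_resolvent hP hμ hc0 hc1 f x a).hasSum.tendsto_sum_nat ?_
  simpa only [hpartial, sub_zero] using tendsto_const_nhds.sub hvanish

end resolvent

variable {r : X → A → ℝ} {γ lam : ℝ}

lemma peng_eq_self_of_bellman_mixP_eq_self (hP : IsKernel P) (hμ : IsPolicy μ)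
    (hc0 : 0 ≤ γ * lam) (hc1 : γ * lam < 1) {Q : X → A → ℝ}
    (hQ : bellman P r γ (mixP lam μ π) Q = Q) : peng P r γ lam μ π Q = Q := by
  refine resolvent_eq_of_eq_add hP hμ hc0 hc1 (funext fun x => funext fun a => ?_)
  have h := congrFun (congrFun hQ x) a
  simp only [bellman, Ppol_mixP] at h
  simp only [Pi.add_apply, Pi.smul_apply, smul_eq_mul]
  linear_combination -h

lemma Adag_add (hP : IsKernel P) (hμ : IsPolicy μ) (hc0 : 0 ≤ γ * lam) (hc1 : γ * lam < 1)
    {πd : X → A → ℝ} (f g : X → A → ℝ) :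
    Adag P γ lam μ πd (f + g) = Adag P γ lam μ πd f + Adag P γ lam μ πd g := by
  funext x a
  simp only [Adag, Ppol_add, resolvent_add hP hμ hc0 hc1, Pi.add_apply, mul_add]

lemma Adag_mono (hP : IsKernel P) (hμ : IsPolicy μ) {πd : X → A → ℝ} (hπd : IsPolicy πd)
    (hc0 : 0 ≤ γ * lam) (hc1 : γ * lam < 1) (hκ : 0 ≤ γ * (1 - lam)) :
    Monotone (Adag P γ lam μ πd) := fun _ _ h x a =>
  mul_le_mul_of_nonneg_left (resolvent_mono hP hμ hc0 hc1 (Ppol_mono hP hπd h) x a) hκ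

lemma peng_sub_peng_le_Adag (hP : IsKernel P) (hμ : IsPolicy μ) {πd : X → A → ℝ}
    (hπd : IsPolicy πd) (hc0 : 0 ≤ γ * lam) (hc1 : γ * lam < 1) (hκ : 0 ≤ γ * (1 - lam))
    {Q Q' : X → A → ℝ} (hπ : IsGreedy π Q) :
    peng P r γ lam μ πd Q' - peng P r γ lam μ π Q ≤ Adag P γ lam μ πd (Q' - Q) := by
  have hgreedy := Ppol_le_of_isGreedy hP hπd hπ
  calc peng P r γ lam μ πd Q' - peng P r γ lam μ π Q
      = resolvent P (γ * lam) μ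
          (fun x a => γ * (1 - lam) * (Ppol P πd Q' x a - Ppol P π Q x a)) := by
        rw [peng, peng, ← resolvent_sub hP hμ hc0 hc1]
        congr 1
        funext x a
        simp only [Pi.sub_apply]
        ring
    _ ≤ resolvent P (γ * lam) μ ((γ * (1 - lam)) • Ppol P πd (Q' - Q)) := by
        refine resolvent_mono hP hμ hc0 hc1 fun x a => ?_
        simp only [Ppol_sub, Pi.smul_apply, Pi.sub_apply, smul_eq_mul]
        exact mul_le_mul_of_nonneg_left (sub_le_sub_left (hgreedy x a) _) hκ
    _ = Adag P γ lam μ πd (Q' - Q) := resolvent_smul _ _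

end RLPQL

theorem peng_dk_upper_bound_fixed_mu_general {X A : Type*} [Fintype X] [Fintype A]
    (P : X → A → X → ℝ) (r : X → A → ℝ) (γ lam : ℝ)
    (hP : IsKernel P) (hγ0 : 0 ≤ γ) (hγ1 : γ < 1) (hlam0 : 0 ≤ lam) (hlam1 : lam ≤ 1)
    (μ πd : X → A → ℝ) (hμ : IsPolicy μ) (hπd : IsPolicy πd)
    (Qof : (X → A → ℝ) → (X → A → ℝ))
    (hQof : ∀ π : X → A → ℝ, IsPolicy π → bellman P r γ π (Qof π) = Qof π)
    (Qseq πseq : ℕ → X → A → ℝ) (ε : ℕ → X → A → ℝ)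
    (hπgreedy : ∀ k, IsGreedy (πseq k) (Qseq k))
    (hrec : ∀ k, Qseq (k + 1) = peng P r γ lam μ (πseq k) (Qseq k) + ε k) :
    ∀ K : ℕ,
      (Qof (mixP lam μ πd) - Qseq K)
          + ∑ k ∈ Finset.range K, (Adag P γ lam μ πd)^[K - k - 1] (ε k)
        ≤ (Adag P γ lam μ πd)^[K] (Qof (mixP lam μ πd) - Qseq 0) := by
  have hc0 : 0 ≤ γ * lam := mul_nonneg hγ0 hlam0
  have hc1 : γ * lam < 1 := (mul_le_of_le_one_right hγ0 hlam1).trans_lt hγ1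
  have hκ : 0 ≤ γ * (1 - lam) := mul_nonneg hγ0 (sub_nonneg.2 hlam1)
  have hfix : peng P r γ lam μ πd (Qof (mixP lam μ πd)) = Qof (mixP lam μ πd) :=
    peng_eq_self_of_bellman_mixP_eq_self hP hμ hc0 hc1 (hQof _ (hμ.mixP hπd hlam0 hlam1))
  refine add_sum_iterate_le_iterate (AddMonoidHom.mk' _ (Adag_add hP hμ hc0 hc1))
    (Adag_mono hP hμ hπd hc0 hc1 hκ) (fun k => Qof (mixP lam μ πd) - Qseq k) ε fun k => ?_
  calc Qof (mixP lam μ πd) - Qseq (k + 1) + ε k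
      = peng P r γ lam μ πd (Qof (mixP lam μ πd)) - peng P r γ lam μ (πseq k) (Qseq k) := by
        rw [hrec, hfix]
        abel
    _ ≤ Adag P γ lam μ πd (Qof (mixP lam μ πd) - Qseq k) :=
        peng_sub_peng_le_Adag hP hμ hπd hc0 hc1 hκ (hπgreedy k)

/-- With `d_k := Q^{ρ†} - Q_k`, the iterates of Peng's Q(λ) with a fixed
behavior policy satisfy `d_K + ∑_{k<K} (A†)^{K-k-1} ε_k ≤ (A†)^K d_0` pointwise. -/
theorem peng_dk_upper_bound_fixed_mu {X A : Type*} [Fintype X] [Fintype A]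
    [Nonempty X] [Nonempty A]
    (P : X → A → X → ℝ) (r : X → A → ℝ) (γ lam : ℝ)
    (hP : IsKernel P) (hγ0 : 0 ≤ γ) (hγ1 : γ < 1) (hlam0 : 0 ≤ lam) (hlam1 : lam ≤ 1)
    (μ πd : X → A → ℝ) (hμ : IsPolicy μ) (hπd : IsPolicy πd)
    (Qof : (X → A → ℝ) → (X → A → ℝ))
    (hQof : ∀ π : X → A → ℝ, IsPolicy π → bellman P r γ π (Qof π) = Qof π)
    (hdag : ∀ π : X → A → ℝ, IsPolicy π → Qof (mixP lam μ π) ≤ Qof (mixP lam μ πd))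
    (Qseq πseq : ℕ → X → A → ℝ) (ε : ℕ → X → A → ℝ)
    (hπpol : ∀ k, IsPolicy (πseq k)) (hπgreedy : ∀ k, IsGreedy (πseq k) (Qseq k))
    (hrec : ∀ k, Qseq (k + 1) = peng P r γ lam μ (πseq k) (Qseq k) + ε k) :
    ∀ K : ℕ,
      (Qof (mixP lam μ πd) - Qseq K)
          + ∑ k ∈ Finset.range K, (Adag P γ lam μ πd)^[K - k - 1] (ε k)
        ≤ (Adag P γ lam μ πd)^[K] (Qof (mixP lam μ πd) - Qseq 0) :=
  peng_dk_upper_bound_fixed_mu_general P r γ lam hP hγ0 hγ1 hlam0 hlam1 μ πd hμ hπd Qof hQof Qseq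
    πseq ε hπgreedy hrec
end
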